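/- Let (X, d, μ) be a metric measure space and let {Δ_k}_{k∈ℤ} be a cubical patchwork with constants σ = 1/2, a₀ > 0, η > 0: in particular, for each cube Q ∈ Δ_k and each 0 < t ≤ 1, the boundary region ∂_t Q satisfies μ(∂_t Q) ≤ a₀ t^η μ(Q). Fix Q₀ ∈ Δ₀ and τ ∈ (0,1], and let s ≥ 1. Define K₀ = Q₀ and K_{k+1} = K_k \ ⋃_{Q ∈ Δ_k(Q₀)} ∂_{τ 2^{-k/(2s)}} Q, where Δ_k(Q₀) is the set of cubes of Δ_k contained in Q₀, and K = ⋂_k K_k. Then μ(Q₀) − μ(K) ≤ a₀ τ^η (1 − 2^{−η/(2s)})⁻¹ μ(Q₀). In particular, for τ sufficiently small, μ(K) > 0. -/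

import Mathlib

/-!
At stage `k` the removed set `K k \ K (k + 1)` lies in the union of the boundary regions of the
cubes of `Δ k` at scale `t_k = τ 2^{-k/(2s)} ≤ 1`. Since the cubes are disjoint and fill `Q₀`,
the boundary estimate bounds its measure by `a₀ t_k^η μ(Q₀) = a₀ τ^η r^k μ(Q₀)` with
`r = 2^{-η/(2s)}`, and `Q₀ \ ⋂ K k` is covered by these removed sets, so summing the geometric
series gives the bound. If the bound is below `μ(Q₀)`, then `μ(⋂ K k)` cannot vanish.
-/

open MeasureTheory

/-- The boundary region `∂_t Q` of a cube `Q` at scale `2^{-k}`: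
points of `Q` within `t·2^{-k}` of the complement, together with points of the
complement within `t·2^{-k}` of `Q`. -/
def boundaryRegion {X : Type*} [MetricSpace X] (k : ℕ) (t : ℝ) (Q : Set X) : Set X :=
  {x ∈ Q | Metric.infDist x Qᶜ < t * 2 ^ (-(k : ℝ))} ∪
  {x ∈ Qᶜ | Metric.infDist x Q < t * 2 ^ (-(k : ℝ))}

open Set

open scoped ENNReal

theorem Set.sdiff_iInter_subset_iUnion_sdiff_succ {X : Type*} (K : ℕ → Set X) :
    K 0 \ ⋂ k, K k ⊆ ⋃ k, K k \ K (k + 1) := by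
  intro x ⟨hx0, hx⟩
  by_contra hstays
  simp only [mem_iUnion, mem_sdiff, not_exists, not_and, not_not] at hstays
  have hmem : ∀ k, x ∈ K k := by
    intro k
    induction k with
    | zero => exact hx0
    | succ k ih => exact hstays k ih
  exact hx (mem_iInter.2 hmem)

theorem MeasureTheory.measure_sub_measure_iInter_le_tsum {X : Type*} [MeasurableSpace X]
    (μ : Measure X) (K : ℕ → Set X) :
    μ (K 0) - μ (⋂ k, K k) ≤ ∑' k, μ (K k \ K (k + 1)) :=
  calc μ (K 0) - μ (⋂ k, K k) ≤ μ (K 0 \ ⋂ k, K k) := le_measure_sdiff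
    _ ≤ μ (⋃ k, K k \ K (k + 1)) := measure_mono (sdiff_iInter_subset_iUnion_sdiff_succ K)
    _ ≤ ∑' k, μ (K k \ K (k + 1)) := measure_iUnion_le _

theorem MeasureTheory.measure_biUnion_le_mul_measure_sUnion {X : Type*} [MeasurableSpace X]
    {μ : Measure X} {S : Set (Set X)} {f : Set X → Set X} {c : ℝ≥0∞}
    (hS : S.Countable) (hmeas : ∀ Q ∈ S, MeasurableSet Q) (hdisj : S.PairwiseDisjoint id)
    (hf : ∀ Q ∈ S, μ (f Q) ≤ c * μ Q) :
    μ (⋃ Q ∈ S, f Q) ≤ c * μ (⋃₀ S) :=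
  calc μ (⋃ Q ∈ S, f Q) ≤ ∑' Q : S, μ (f Q) := measure_biUnion_le μ hS f
    _ ≤ ∑' Q : S, c * μ Q := ENNReal.tsum_le_tsum fun Q => hf Q Q.2
    _ = c * μ (⋃₀ S) := by rw [ENNReal.tsum_mul_left, measure_sUnion hS hdisj hmeas]

theorem Real.mul_two_rpow_div_rpow {τ s : ℝ} (hτ : 0 ≤ τ) (hs : s ≠ 0) (η : ℝ) (k : ℕ) :
    (τ * 2 ^ (-(k : ℝ) / s)) ^ η = τ ^ η * ((2 : ℝ) ^ (-η / s)) ^ k := by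
  rw [Real.mul_rpow hτ (by positivity), ← Real.rpow_natCast, ← Real.rpow_mul zero_le_two,
    ← Real.rpow_mul zero_le_two]
  congr 2
  field_simp

theorem Real.mul_two_rpow_neg_div_mem_Ioc {τ s : ℝ} (hτ : τ ∈ Ioc 0 1) (hs : 0 ≤ s) (k : ℕ) :
    τ * 2 ^ (-(k : ℝ) / s) ∈ Ioc 0 1 := by
  have hscale : (2 : ℝ) ^ (-(k : ℝ) / s) ≤ 1 :=
    Real.rpow_le_one_of_one_le_of_nonpos one_le_two
      (div_nonpos_of_nonpos_of_nonneg (neg_nonpos.2 k.cast_nonneg) hs)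
  exact ⟨mul_pos hτ.1 (by positivity), mul_le_one₀ hτ.2 (by positivity) hscale⟩

theorem cantor_set_positive_measure_general {X : Type*} [MetricSpace X] [MeasurableSpace X]
    (μ : Measure X) (Δ : ℕ → Set (Set X)) (Q₀ : Set X)
    (a₀ : ENNReal) (η s τ : ℝ)
    (hs : 1 ≤ s) (hτ : 0 < τ) (hτ1 : τ ≤ 1)
    (hcount : ∀ k, (Δ k).Countable)
    (hmeas : ∀ k, ∀ Q ∈ Δ k, MeasurableSet Q)
    (hpart : ∀ k, ⋃₀ Δ k = Q₀)
    (hdisj : ∀ k, (Δ k).PairwiseDisjoint id)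
    (hbd : ∀ k, ∀ Q ∈ Δ k, ∀ t : ℝ, 0 < t → t ≤ 1 →
      μ (boundaryRegion k t Q) ≤ a₀ * ENNReal.ofReal (t ^ η) * μ Q)
    (K : ℕ → Set X) (hK0 : K 0 = Q₀)
    (hKsucc : ∀ k, K (k + 1) =
      K k \ ⋃ Q ∈ Δ k, boundaryRegion k (τ * 2 ^ (-(k : ℝ) / (2 * s))) Q) :
    μ Q₀ - μ (⋂ k, K k) ≤
      a₀ * ENNReal.ofReal (τ ^ η) *
        (1 - ENNReal.ofReal (2 ^ (-η / (2 * s))))⁻¹ * μ Q₀ ∧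
    (a₀ * ENNReal.ofReal (τ ^ η) *
        (1 - ENNReal.ofReal (2 ^ (-η / (2 * s))))⁻¹ * μ Q₀ < μ Q₀ →
      0 < μ (⋂ k, K k)) := by
  set r := ENNReal.ofReal (2 ^ (-η / (2 * s)))
  have hs0 : 0 < 2 * s := by linarith
  have hstep (k : ℕ) : μ (K k \ K (k + 1)) ≤ a₀ * ENNReal.ofReal (τ ^ η) * μ Q₀ * r ^ k := by
    set t := τ * (2 : ℝ) ^ (-(k : ℝ) / (2 * s))
    have ht : t ∈ Ioc 0 1 := Real.mul_two_rpow_neg_div_mem_Ioc ⟨hτ, hτ1⟩ hs0.le k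
    calc μ (K k \ K (k + 1)) ≤ μ (⋃ Q ∈ Δ k, boundaryRegion k t Q) := by
          rw [hKsucc k, sdiff_sdiff_right_self]; exact measure_mono inter_subset_right
      _ ≤ a₀ * ENNReal.ofReal (t ^ η) * μ (⋃₀ Δ k) :=
          measure_biUnion_le_mul_measure_sUnion (hcount k) (hmeas k) (hdisj k)
            fun Q hQ => hbd k Q hQ t ht.1 ht.2
      _ = a₀ * ENNReal.ofReal (τ ^ η) * μ Q₀ * r ^ k := by
          rw [hpart k, Real.mul_two_rpow_div_rpow hτ.le hs0.ne', ENNReal.ofReal_mul (by positivity),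
            ENNReal.ofReal_pow (by positivity)]
          ring
  have hmain : μ Q₀ - μ (⋂ k, K k) ≤ a₀ * ENNReal.ofReal (τ ^ η) * (1 - r)⁻¹ * μ Q₀ :=
    calc μ Q₀ - μ (⋂ k, K k) ≤ ∑' k, μ (K k \ K (k + 1)) :=
          hK0 ▸ measure_sub_measure_iInter_le_tsum μ K
      _ ≤ ∑' k, a₀ * ENNReal.ofReal (τ ^ η) * μ Q₀ * r ^ k := ENNReal.tsum_le_tsum hstep
      _ = a₀ * ENNReal.ofReal (τ ^ η) * (1 - r)⁻¹ * μ Q₀ := by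
          rw [ENNReal.tsum_mul_left, ENNReal.tsum_geometric]; ring
  refine ⟨hmain, fun hlt => pos_iff_ne_zero.2 fun hK => ?_⟩
  rw [hK, tsub_zero] at hmain
  exact (hmain.trans_lt hlt).false

/-- for the Cantor set `K = ⋂ K_k` constructed from a cubical patchwork by
removing boundary regions `∂_{τ2^{-k/(2s)}}Q` at each stage,
`μ(Q₀) − μ(K) ≤ a₀ τ^η (1 − 2^{−η/(2s)})⁻¹ μ(Q₀)`; in particular if this bound is
less than `μ(Q₀)` (e.g. for `τ` sufficiently small), then `μ(K) > 0`. -/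
theorem cantor_set_positive_measure {X : Type*} [MetricSpace X] [MeasurableSpace X]
    (μ : Measure X) (Δ : ℕ → Set (Set X)) (Q₀ : Set X)
    (a₀ : ENNReal) (η s τ : ℝ)
    (ha₀ : 0 < a₀) (hη : 0 < η) (hs : 1 ≤ s) (hτ : 0 < τ) (hτ1 : τ ≤ 1)
    (hcount : ∀ k, (Δ k).Countable)
    (hmeas : ∀ k, ∀ Q ∈ Δ k, MeasurableSet Q)
    (hpart : ∀ k, ⋃₀ Δ k = Q₀)
    (hdisj : ∀ k, (Δ k).PairwiseDisjoint id)
    (hQ₀fin : μ Q₀ < ⊤) (hQ₀pos : 0 < μ Q₀)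
    (hbd : ∀ k, ∀ Q ∈ Δ k, ∀ t : ℝ, 0 < t → t ≤ 1 →
      μ (boundaryRegion k t Q) ≤ a₀ * ENNReal.ofReal (t ^ η) * μ Q)
    (K : ℕ → Set X) (hK0 : K 0 = Q₀)
    (hKsucc : ∀ k, K (k + 1) =
      K k \ ⋃ Q ∈ Δ k, boundaryRegion k (τ * 2 ^ (-(k : ℝ) / (2 * s))) Q) :
    μ Q₀ - μ (⋂ k, K k) ≤
      a₀ * ENNReal.ofReal (τ ^ η) *
        (1 - ENNReal.ofReal (2 ^ (-η / (2 * s))))⁻¹ * μ Q₀ ∧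
    (a₀ * ENNReal.ofReal (τ ^ η) *
        (1 - ENNReal.ofReal (2 ^ (-η / (2 * s))))⁻¹ * μ Q₀ < μ Q₀ →
      0 < μ (⋂ k, K k)) :=
  cantor_set_positive_measure_general μ Δ Q₀ a₀ η s τ hs hτ hτ1 hcount hmeas hpart hdisj hbd K hK0
    hKsucc
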